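/- Under the standing hypotheses (including the additional ones for the degree-two maps), define 𝚫₂^W : X⊗X → Z by 𝚫₂^W := Δ₂^W∘(𝐛₁^V⊗𝐛₁^V) (values in C′ ⊆ Z). Then 𝚫₂^W∘(m₁^{V⊙W}⊗id_X) + 𝚫₂^W∘(id_X⊗m₁^{V⊙W}) + 𝚫₁^W∘m₂^{V⊙W} + m₂^V∘(𝚫₁^W⊗𝚫₁^W) + m₁^V∘𝚫₂^W = 0 as maps X⊗X → Z. (Equation (37) in the proof of Proposition 6.2 of the paper; it implies that the transfer map 𝚫₁^W preserves the product structures in homology.) -/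

import Mathlib

open TensorProduct

namespace LegoutStmt8

variable {P Q C C' : Type*}
  [AddCommGroup P] [Module (ZMod 2) P]
  [AddCommGroup Q] [Module (ZMod 2) Q]
  [AddCommGroup C] [Module (ZMod 2) C]
  [AddCommGroup C'] [Module (ZMod 2) C']

/-- `𝚫₁^W : X = P ⊕ Q → Z = C′ ⊕ Q`, `p + q ↦ Δ₁^W(p) + q`. -/
def boldDelta1W (Δ1W : P →ₗ[ZMod 2] C') : (P × Q) →ₗ[ZMod 2] C' × Q :=
  LinearMap.prod (Δ1W ∘ₗ LinearMap.fst (ZMod 2) P Q) (LinearMap.snd (ZMod 2) P Q)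

/-- `𝐛₁^V : X → Y = P ⊕ C`, `p + q ↦ p + b₁^V(Δ₁^W(p)) + b₁^V(q)`. -/
def boldB1V (Δ1W : P →ₗ[ZMod 2] C') (b1V : (C' × Q) →ₗ[ZMod 2] C) :
    (P × Q) →ₗ[ZMod 2] P × C :=
  LinearMap.prod (LinearMap.fst (ZMod 2) P Q) (b1V ∘ₗ boldDelta1W Δ1W)

/-- `𝚫₁^{W⊂W} : Y → 𝔠 = C′ ⊕ C`, `p + c ↦ Δ₁^W(p) + c`. -/
def delta1WW (Δ1W : P →ₗ[ZMod 2] C') : (P × C) →ₗ[ZMod 2] C' × C :=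
  LinearMap.prod (Δ1W ∘ₗ LinearMap.fst (ZMod 2) P C) (LinearMap.snd (ZMod 2) P C)

/-- `𝐛₁^{V⊂V} : Z → 𝔠`, `c′ + q ↦ c′ + b₁^V(c′) + b₁^V(q)`. -/
def b1VV (b1V : (C' × Q) →ₗ[ZMod 2] C) : (C' × Q) →ₗ[ZMod 2] C' × C :=
  LinearMap.prod (LinearMap.fst (ZMod 2) C' Q) b1V

/-- `m₁^{V⊙W} := m₁^{W,+0}∘𝐛₁^V + m₁^{V,0−}∘𝚫₁^W : X → X`. -/
def m1VoW (mW0 : (P × C) →ₗ[ZMod 2] P) (mV0 : (C' × Q) →ₗ[ZMod 2] Q)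
    (Δ1W : P →ₗ[ZMod 2] C') (b1V : (C' × Q) →ₗ[ZMod 2] C) :
    (P × Q) →ₗ[ZMod 2] P × Q :=
  LinearMap.prod (mW0 ∘ₗ boldB1V Δ1W b1V) (mV0 ∘ₗ boldDelta1W Δ1W)

/-- The `P`-valued component `m₂^{V⊙W,+0_W}` of `m₂^{V⊙W}`:
`m₂^{W,+0}∘(𝐛₁^V⊗𝐛₁^V) + m₁^{W,+0}∘b₁^V∘Δ₂^W∘(𝐛₁^V⊗𝐛₁^V) + m₁^{W,+0}∘b₂^V∘(𝚫₁^W⊗𝚫₁^W)`. -/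
noncomputable def m2PComp (mW0 : (P × C) →ₗ[ZMod 2] P)
    (Δ1W : P →ₗ[ZMod 2] C') (b1V : (C' × Q) →ₗ[ZMod 2] C)
    (m2W0 : ((P × C) ⊗[ZMod 2] (P × C)) →ₗ[ZMod 2] P)
    (Δ2W : ((P × C) ⊗[ZMod 2] (P × C)) →ₗ[ZMod 2] C')
    (b2V : ((C' × Q) ⊗[ZMod 2] (C' × Q)) →ₗ[ZMod 2] C) :
    ((P × Q) ⊗[ZMod 2] (P × Q)) →ₗ[ZMod 2] P :=
  m2W0 ∘ₗ TensorProduct.map (boldB1V Δ1W b1V) (boldB1V Δ1W b1V)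
    + mW0 ∘ₗ LinearMap.inr (ZMod 2) P C ∘ₗ b1V ∘ₗ LinearMap.inl (ZMod 2) C' Q ∘ₗ Δ2W
        ∘ₗ TensorProduct.map (boldB1V Δ1W b1V) (boldB1V Δ1W b1V)
    + mW0 ∘ₗ LinearMap.inr (ZMod 2) P C ∘ₗ b2V
        ∘ₗ TensorProduct.map (boldDelta1W Δ1W) (boldDelta1W Δ1W)

/-- The `Q`-valued component `m₂^{V⊙W,0_V−}` of `m₂^{V⊙W}`:
`m₂^{V,0−}∘(𝚫₁^W⊗𝚫₁^W) + m₁^{V,0−}∘Δ₂^W∘(𝐛₁^V⊗𝐛₁^V)`. -/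
noncomputable def m2QComp (mV0 : (C' × Q) →ₗ[ZMod 2] Q)
    (Δ1W : P →ₗ[ZMod 2] C') (b1V : (C' × Q) →ₗ[ZMod 2] C)
    (m2V0 : ((C' × Q) ⊗[ZMod 2] (C' × Q)) →ₗ[ZMod 2] Q)
    (Δ2W : ((P × C) ⊗[ZMod 2] (P × C)) →ₗ[ZMod 2] C') :
    ((P × Q) ⊗[ZMod 2] (P × Q)) →ₗ[ZMod 2] Q :=
  m2V0 ∘ₗ TensorProduct.map (boldDelta1W Δ1W) (boldDelta1W Δ1W)
    + mV0 ∘ₗ LinearMap.inl (ZMod 2) C' Q ∘ₗ Δ2W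
        ∘ₗ TensorProduct.map (boldB1V Δ1W b1V) (boldB1V Δ1W b1V)

/-- `m₂^{V⊙W} : X ⊗ X → X`. -/
noncomputable def m2VoW (mW0 : (P × C) →ₗ[ZMod 2] P) (mV0 : (C' × Q) →ₗ[ZMod 2] Q)
    (Δ1W : P →ₗ[ZMod 2] C') (b1V : (C' × Q) →ₗ[ZMod 2] C)
    (m2W0 : ((P × C) ⊗[ZMod 2] (P × C)) →ₗ[ZMod 2] P)
    (m2V0 : ((C' × Q) ⊗[ZMod 2] (C' × Q)) →ₗ[ZMod 2] Q)
    (Δ2W : ((P × C) ⊗[ZMod 2] (P × C)) →ₗ[ZMod 2] C')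
    (b2V : ((C' × Q) ⊗[ZMod 2] (C' × Q)) →ₗ[ZMod 2] C) :
    ((P × Q) ⊗[ZMod 2] (P × Q)) →ₗ[ZMod 2] P × Q :=
  LinearMap.prod (m2PComp mW0 Δ1W b1V m2W0 Δ2W b2V) (m2QComp mV0 Δ1W b1V m2V0 Δ2W)

/-- `𝚫₂^W := Δ₂^W∘(𝐛₁^V⊗𝐛₁^V) : X⊗X → Z` (values in `C′ ⊆ Z`). -/
noncomputable def boldDelta2W (Δ1W : P →ₗ[ZMod 2] C') (b1V : (C' × Q) →ₗ[ZMod 2] C)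
    (Δ2W : ((P × C) ⊗[ZMod 2] (P × C)) →ₗ[ZMod 2] C') :
    ((P × Q) ⊗[ZMod 2] (P × Q)) →ₗ[ZMod 2] C' × Q :=
  LinearMap.inl (ZMod 2) C' Q
    ∘ₗ Δ2W ∘ₗ TensorProduct.map (boldB1V Δ1W b1V) (boldB1V Δ1W b1V)


lemma char2_add_self {M : Type*} [AddCommGroup M] [Module (ZMod 2) M] (x : M) :
    x + x = 0 := by
  have h := two_smul (ZMod 2) x
  rw [show (2 : ZMod 2) = 0 by decide, zero_smul] at h
  exact h.symm

/-- Equation (37) in the proof of Proposition 6.2 of Legout's paper: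
`𝚫₂^W∘(m₁^{V⊙W}⊗id) + 𝚫₂^W∘(id⊗m₁^{V⊙W}) + 𝚫₁^W∘m₂^{V⊙W} + m₂^V∘(𝚫₁^W⊗𝚫₁^W) + m₁^V∘𝚫₂^W = 0`. -/
theorem transfer_boldDelta_product
    (mW0 : (P × C) →ₗ[ZMod 2] P) (mWm : (P × C) →ₗ[ZMod 2] C)
    (mVp : (C' × Q) →ₗ[ZMod 2] C') (mV0 : (C' × Q) →ₗ[ZMod 2] Q)
    (Δ1W : P →ₗ[ZMod 2] C') (b1V : (C' × Q) →ₗ[ZMod 2] C)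
    (Δ1L : C' →ₗ[ZMod 2] C') (b1L : (C' × C) →ₗ[ZMod 2] C)
    (m2W0 : ((P × C) ⊗[ZMod 2] (P × C)) →ₗ[ZMod 2] P)
    (m2Wm : ((P × C) ⊗[ZMod 2] (P × C)) →ₗ[ZMod 2] C)
    (m2Vp : ((C' × Q) ⊗[ZMod 2] (C' × Q)) →ₗ[ZMod 2] C')
    (m2V0 : ((C' × Q) ⊗[ZMod 2] (C' × Q)) →ₗ[ZMod 2] Q)
    (Δ2W : ((P × C) ⊗[ZMod 2] (P × C)) →ₗ[ZMod 2] C')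
    (b2V : ((C' × Q) ⊗[ZMod 2] (C' × Q)) →ₗ[ZMod 2] C)
    (Δ2L : ((C' × C) ⊗[ZMod 2] (C' × C)) →ₗ[ZMod 2] C')
    (b2L : ((C' × C) ⊗[ZMod 2] (C' × C)) →ₗ[ZMod 2] C)
    -- (D1) m₁^W ∘ m₁^W = 0
    (hD1 : (LinearMap.prod mW0 mWm) ∘ₗ (LinearMap.prod mW0 mWm) = 0)
    -- (D2) m₁^V ∘ m₁^V = 0
    (hD2 : (LinearMap.prod mVp mV0) ∘ₗ (LinearMap.prod mVp mV0) = 0)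
    -- (S1) m₁^{W,−} = b₁^Λ ∘ 𝚫₁^{W⊂W}
    (hS1 : mWm = b1L ∘ₗ delta1WW Δ1W)
    -- (S2) m₁^{V,+} = Δ₁^Λ ∘ π_{C′}
    (hS2 : mVp = Δ1L ∘ₗ LinearMap.fst (ZMod 2) C' Q)
    -- (R1) Δ₁^W ∘ m₁^{W,+0} = Δ₁^Λ ∘ Δ₁^W ∘ π_P
    (hR1 : Δ1W ∘ₗ mW0 = (Δ1L ∘ₗ Δ1W) ∘ₗ LinearMap.fst (ZMod 2) P C)
    -- (R2) b₁^V ∘ m₁^V = b₁^Λ ∘ 𝐛₁^{V⊂V}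
    (hR2 : b1V ∘ₗ (LinearMap.prod mVp mV0) = b1L ∘ₗ b1VV b1V)
    -- (L1)
    (hL1 : m2W0 ∘ₗ LinearMap.rTensor (P × C) (LinearMap.prod mW0 mWm)
      + m2W0 ∘ₗ LinearMap.lTensor (P × C) (LinearMap.prod mW0 mWm)
      + mW0 ∘ₗ LinearMap.prod m2W0 m2Wm = 0)
    -- (L2)
    (hL2 : m2V0 ∘ₗ LinearMap.rTensor (C' × Q) (LinearMap.prod mVp mV0)
      + m2V0 ∘ₗ LinearMap.lTensor (C' × Q) (LinearMap.prod mVp mV0)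
      + mV0 ∘ₗ LinearMap.prod m2Vp m2V0 = 0)
    -- (L3)
    (hL3 : Δ2W ∘ₗ LinearMap.rTensor (P × C) (LinearMap.prod mW0 mWm)
      + Δ2W ∘ₗ LinearMap.lTensor (P × C) (LinearMap.prod mW0 mWm)
      + Δ1W ∘ₗ m2W0
      + Δ2L ∘ₗ TensorProduct.map (delta1WW Δ1W) (delta1WW Δ1W)
      + Δ1L ∘ₗ Δ2W = 0)
    -- (L4)
    (hL4 : b2V ∘ₗ LinearMap.rTensor (C' × Q) (LinearMap.prod mVp mV0)
      + b2V ∘ₗ LinearMap.lTensor (C' × Q) (LinearMap.prod mVp mV0)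
      + b1V ∘ₗ LinearMap.prod m2Vp m2V0
      + b2L ∘ₗ TensorProduct.map (b1VV b1V) (b1VV b1V)
      + b1L ∘ₗ LinearMap.inr (ZMod 2) C' C ∘ₗ b2V = 0)
    -- (S1′)
    (hS1' : m2Wm = b1L ∘ₗ LinearMap.inl (ZMod 2) C' C ∘ₗ Δ2W
      + b2L ∘ₗ TensorProduct.map (delta1WW Δ1W) (delta1WW Δ1W))
    -- (S2′)
    (hS2' : m2Vp = Δ2L ∘ₗ TensorProduct.map (b1VV b1V) (b1VV b1V)) :
    (boldDelta2W Δ1W b1V Δ2W) ∘ₗ LinearMap.rTensor (P × Q) (m1VoW mW0 mV0 Δ1W b1V)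
      + (boldDelta2W Δ1W b1V Δ2W) ∘ₗ LinearMap.lTensor (P × Q) (m1VoW mW0 mV0 Δ1W b1V)
      + (boldDelta1W Δ1W) ∘ₗ (m2VoW mW0 mV0 Δ1W b1V m2W0 m2V0 Δ2W b2V)
      + (LinearMap.prod m2Vp m2V0)
          ∘ₗ TensorProduct.map (boldDelta1W Δ1W) (boldDelta1W Δ1W)
      + (LinearMap.prod mVp mV0) ∘ₗ (boldDelta2W Δ1W b1V Δ2W) = 0 := by
  have hR1' : ∀ y : P × C, Δ1W (mW0 y) = Δ1L (Δ1W y.1) := by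
    intro y; simpa using LinearMap.congr_fun hR1 y
  have hS2e : ∀ z : C' × Q, mVp z = Δ1L z.1 := by
    intro z; simpa using LinearMap.congr_fun hS2 z
  have hS1e : ∀ y : P × C, mWm y = b1L (delta1WW Δ1W y) := by
    intro y; simpa using LinearMap.congr_fun hS1 y
  have hR2e : ∀ z : C' × Q, b1V ((LinearMap.prod mVp mV0) z) = b1L (b1VV b1V z) := by
    intro z; simpa using LinearMap.congr_fun hR2 z
  have keyA : ∀ x : P × Q,
      delta1WW Δ1W (boldB1V Δ1W b1V x) = b1VV b1V (boldDelta1W Δ1W x) := by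
    intro x; simp [delta1WW, b1VV, boldB1V, boldDelta1W]
  have key3 : ∀ x : P × Q,
      boldDelta1W Δ1W (m1VoW mW0 mV0 Δ1W b1V x)
        = LinearMap.prod mVp mV0 (boldDelta1W Δ1W x) := by
    intro x
    simp [boldDelta1W, m1VoW, boldB1V, hR1', hS2e]
  have key2 : ∀ x : P × Q,
      boldB1V Δ1W b1V (m1VoW mW0 mV0 Δ1W b1V x)
        = LinearMap.prod mW0 mWm (boldB1V Δ1W b1V x) := by
    intro x
    have h3 := key3 x
    apply Prod.ext
    · simp [boldB1V, m1VoW]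
    · show b1V (boldDelta1W Δ1W (m1VoW mW0 mV0 Δ1W b1V x)) = _
      rw [h3, hR2e, ← keyA, ← hS1e]
      simp [boldB1V]
  apply TensorProduct.ext'
  intro x y
  have hL3' := LinearMap.congr_fun hL3 ((boldB1V Δ1W b1V x) ⊗ₜ[ZMod 2] (boldB1V Δ1W b1V y))
  have hS2'' := LinearMap.congr_fun hS2' ((boldDelta1W Δ1W x) ⊗ₜ[ZMod 2] (boldDelta1W Δ1W y))
  simp only [LinearMap.add_apply, LinearMap.coe_comp, Function.comp_apply,
    LinearMap.rTensor_tmul, LinearMap.lTensor_tmul, TensorProduct.map_tmul,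
    boldDelta2W, m2VoW, m2PComp, m2QComp, LinearMap.prod_apply, Function.prod,
    LinearMap.inl_apply, LinearMap.inr_apply, LinearMap.fst_apply, LinearMap.snd_apply,
    LinearMap.zero_apply, map_add, key2, key3, ← keyA, hS2e] at hL3' hS2'' ⊢
  have hDapp : ∀ (u : P) (v : Q), boldDelta1W Δ1W (u, v) = (Δ1W u, v) := by
    intro u v; simp [boldDelta1W]
  simp only [hDapp, map_add, hR1', hS2'']
  simp only [map_zero]
  have hDx : ∀ z : P × Q, boldDelta1W Δ1W z = (Δ1W z.1, z.2) := fun z => rfl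
  simp only [hDx] at hS2''
  rw [Prod.ext_iff]
  constructor
  · simp only [Prod.fst_add, Prod.fst_zero, add_zero]
    rw [hS2'']
    simpa using hL3'
  · simp only [Prod.snd_add, Prod.snd_zero, zero_add]
    abel_nf
    simp [two_zsmul, char2_add_self]

end LegoutStmt8
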